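/- All posterior central moments μ_k(y) of log x in the Poisson model are uniquely determined by the function μ₁(y) = E[log x | y] and its derivatives: specifically, μ₂ = μ₁', μ₃ = μ₁'', and each μ_{k+1} is obtained from μ_k' plus products of lower-order moments via μ_{k+1} = μ_k' + k μ₂ μ_{k−1} (k ≥ 3). -/

import Mathlib

open MeasureTheory Set

/-- digamma function ψ = (log Γ)' -/
noncomputable def digamma (t : ℝ) : ℝ := deriv (fun s => Real.log (Real.Gamma s)) t

/-- Poisson likelihood continuously extended to real observations. -/
noncomputable def plik (x y : ℝ) : ℝ := x ^ y * Real.exp (-x) / Real.Gamma (y + 1)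

/-- marginal density of the observation -/
noncomputable def marg (px : ℝ → ℝ) (t : ℝ) : ℝ := ∫ x in Set.Ioi (0:ℝ), plik x t * px x

/-- posterior expectation E[f(x) | y = t] -/
noncomputable def postExp (px : ℝ → ℝ) (f : ℝ → ℝ) (t : ℝ) : ℝ :=
  (∫ x in Set.Ioi (0:ℝ), f x * plik x t * px x) / marg px t

/-- k-th posterior central moment of log x -/
noncomputable def cmom (px : ℝ → ℝ) (k : ℕ) (t : ℝ) : ℝ :=
  (∫ x in Set.Ioi (0:ℝ), (Real.log x - postExp px Real.log t) ^ k * plik x t * px x) / marg px t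


/-!
Since `∂ₜ plik x t = (log x - ψ(t + 1)) * plik x t`, the derivative of any unnormalised posterior
integral `F t = ∫ f x * plik x t * px x` is `A t * marg px t + (μ₁ t - ψ(t + 1)) * F t` once
`log x - ψ(t + 1)` is expanded around the posterior mean `μ₁ t`; the marginal itself has `A = 0`
because the first central moment vanishes. The drift `μ₁ - ψ` therefore cancels in `F / marg`,
whose derivative is the posterior average `A / marg`: this is `μ₂` for `F = ∫ log x …`, and
`μ_{j+2} - (j + 1) μ₂ μ_j` for the `(j + 1)`-st central moment, the second term coming from the
moving centre `μ₁`.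
-/

lemma plik_nonneg {x t : ℝ} (hx : 0 < x) (ht : -1 < t) : 0 ≤ plik x t := by
  unfold plik
  have := Real.Gamma_pos_of_pos (show 0 < t + 1 by linarith)
  positivity

lemma hasDerivAt_plik {x t : ℝ} (hx : 0 < x) (ht : -1 < t) :
    HasDerivAt (plik x) ((Real.log x - digamma (t + 1)) * plik x t) t := by
  have hΓpos : 0 < Real.Gamma (t + 1) := Real.Gamma_pos_of_pos (by linarith)
  have hΓ : HasDerivAt Real.Gamma (deriv Real.Gamma (t + 1)) (t + 1) := by
    refine (Real.differentiableAt_Gamma fun m hm => ?_).hasDerivAt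
    have : (0 : ℝ) ≤ m := m.cast_nonneg
    linarith
  have hψ : digamma (t + 1) = deriv Real.Gamma (t + 1) / Real.Gamma (t + 1) :=
    (hΓ.log hΓpos.ne').deriv
  have hq := (((Real.hasStrictDerivAt_const_rpow hx t).hasDerivAt).mul_const
    (Real.exp (-x))).div (hΓ.comp_add_const t 1) hΓpos.ne'
  refine hq.congr_deriv ?_
  rw [hψ, plik]
  field_simp

def LogMomentsIntegrable (px : ℝ → ℝ) (t : ℝ) : Prop :=
  ∀ (j : ℕ) (c : ℝ), IntegrableOn (fun x => (Real.log x - c) ^ j * plik x t * px x) (Ioi 0)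

lemma logMomentsIntegrable_of_abs_log_pow {px : ℝ → ℝ} {t : ℝ}
    (hnn : ∀ x ∈ Ioi (0:ℝ), 0 ≤ px x) (ht : -1 < t)
    (hint : ∀ k : ℕ, IntegrableOn (fun x => |Real.log x| ^ k * plik x t * px x) (Ioi 0)) :
    LogMomentsIntegrable px t := by
  intro j c
  have hw : AEStronglyMeasurable (fun x => plik x t * px x) (volume.restrict (Ioi 0)) := by
    simpa using (hint 0).aestronglyMeasurable
  refine (((hint j).add ((hint 0).const_mul (|c| ^ j))).const_mul (2 ^ (j - 1))).mono' ?_ ?_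
  · simpa only [Pi.mul_def, ← mul_assoc] using
      ((Real.measurable_log.sub_const c).pow_const j).aestronglyMeasurable.mul hw
  · filter_upwards [ae_restrict_mem measurableSet_Ioi] with x hx
    have hw0 : 0 ≤ plik x t * px x := mul_nonneg (plik_nonneg hx ht) (hnn x hx)
    have hbound : |Real.log x - c| ^ j ≤ 2 ^ (j - 1) * (|Real.log x| ^ j + |c| ^ j) :=
      (pow_le_pow_left₀ (abs_nonneg _) (abs_sub _ _) j).trans
        (add_pow_le (abs_nonneg _) (abs_nonneg _) j)
    rw [Real.norm_eq_abs, mul_assoc, abs_mul, abs_pow, abs_of_nonneg hw0]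
    calc |Real.log x - c| ^ j * (plik x t * px x)
        ≤ 2 ^ (j - 1) * (|Real.log x| ^ j + |c| ^ j) * (plik x t * px x) := by gcongr
      _ = _ := by simp only [Pi.add_apply, pow_zero, one_mul]; ring

/-- Unnormalised: the posterior moment is `logMoment px c j t / marg px t`. -/
noncomputable def logMoment (px : ℝ → ℝ) (c : ℝ) (j : ℕ) (t : ℝ) : ℝ :=
  ∫ x in Ioi (0:ℝ), (Real.log x - c) ^ j * plik x t * px x

lemma logMoment_zero (px : ℝ → ℝ) (c t : ℝ) : logMoment px c 0 t = marg px t := by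
  simp [logMoment, marg]

lemma cmom_eq_logMoment_div (px : ℝ → ℝ) (k : ℕ) (t : ℝ) :
    cmom px k t = logMoment px (postExp px Real.log t) k t / marg px t :=
  rfl

lemma postExp_mul_marg {px : ℝ → ℝ} {t : ℝ} (hm : marg px t ≠ 0) (f : ℝ → ℝ) :
    postExp px f t * marg px t = ∫ x in Ioi (0:ℝ), f x * plik x t * px x :=
  div_mul_cancel₀ _ hm

lemma LogMomentsIntegrable.setIntegral_eq_logMoment_comb {px : ℝ → ℝ} {t : ℝ}
    (hI : LogMomentsIntegrable px t) {g : ℝ → ℝ} (c a b d : ℝ) (i j k : ℕ)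
    (hg : ∀ x ∈ Ioi (0:ℝ), g x = (a * (Real.log x - c) ^ i + b * (Real.log x - c) ^ j
      + d * (Real.log x - c) ^ k) * plik x t * px x) :
    ∫ x in Ioi (0:ℝ), g x
      = a * logMoment px c i t + b * logMoment px c j t + d * logMoment px c k t := by
  have hg' : ∀ x ∈ Ioi (0:ℝ), g x = a * ((Real.log x - c) ^ i * plik x t * px x)
      + b * ((Real.log x - c) ^ j * plik x t * px x)
      + d * ((Real.log x - c) ^ k * plik x t * px x) := fun x hx => by rw [hg x hx]; ring
  have hab : IntegrableOn (fun x => a * ((Real.log x - c) ^ i * plik x t * px x)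
      + b * ((Real.log x - c) ^ j * plik x t * px x)) (Ioi 0) :=
    ((hI i c).const_mul a).add ((hI j c).const_mul b)
  rw [setIntegral_congr_fun measurableSet_Ioi hg', integral_add hab ((hI k c).const_mul d),
    integral_add ((hI i c).const_mul a) ((hI j c).const_mul b),
    integral_const_mul, integral_const_mul, integral_const_mul]
  rfl

lemma logMoment_postExp_log_one {px : ℝ → ℝ} {t : ℝ} (hI : LogMomentsIntegrable px t)
    (hm : marg px t ≠ 0) : logMoment px (postExp px Real.log t) 1 t = 0 := by
  set c := postExp px Real.log t
  have h := hI.setIntegral_eq_logMoment_comb c 1 c 0 1 0 0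
    (g := fun x => Real.log x * plik x t * px x) fun x _ => by ring
  rw [← postExp_mul_marg hm, logMoment_zero] at h
  linarith

lemma cmom_one {px : ℝ → ℝ} {t : ℝ} (hI : LogMomentsIntegrable px t) (hm : marg px t ≠ 0) :
    cmom px 1 t = 0 := by
  rw [cmom_eq_logMoment_div, logMoment_postExp_log_one hI hm, zero_div]

lemma HasDerivAt.div_of_common_drift {f g : ℝ → ℝ} {a b x : ℝ}
    (hf : HasDerivAt f (a * g x + b * f x) x) (hg : HasDerivAt g (b * g x) x) (hg0 : g x ≠ 0) :
    HasDerivAt (fun y => f y / g y) a x := by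
  refine (hf.div hg hg0).congr_deriv ?_
  field_simp
  ring

lemma hasDerivAt_marg {px : ℝ → ℝ} {t ψ : ℝ} (hI : LogMomentsIntegrable px t)
    (hm : marg px t ≠ 0)
    (hD : HasDerivAt (marg px) (∫ x in Ioi (0:ℝ), (Real.log x - ψ) * plik x t * px x) t) :
    HasDerivAt (marg px) ((postExp px Real.log t - ψ) * marg px t) t := by
  set c := postExp px Real.log t
  refine hD.congr_deriv ?_
  rw [hI.setIntegral_eq_logMoment_comb c 1 (c - ψ) 0 1 0 0 fun x _ => by ring,
    logMoment_postExp_log_one hI hm, logMoment_zero]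
  ring

lemma hasDerivAt_postExp_log {px : ℝ → ℝ} {t ψ : ℝ} (hI : LogMomentsIntegrable px t)
    (hm : marg px t ≠ 0)
    (hD : HasDerivAt (marg px) (∫ x in Ioi (0:ℝ), (Real.log x - ψ) * plik x t * px x) t)
    (hN : HasDerivAt (fun s => ∫ x in Ioi (0:ℝ), Real.log x * plik x s * px x)
      (∫ x in Ioi (0:ℝ), Real.log x * (Real.log x - ψ) * plik x t * px x) t) :
    HasDerivAt (postExp px Real.log) (cmom px 2 t) t := by
  set c := postExp px Real.log t
  refine (hN.congr_deriv ?_).div_of_common_drift (hasDerivAt_marg hI hm hD) hm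
  rw [hI.setIntegral_eq_logMoment_comb c 1 (2 * c - ψ) (c * (c - ψ)) 2 1 0 fun x _ => by ring,
    logMoment_postExp_log_one hI hm, logMoment_zero, ← postExp_mul_marg hm, cmom_eq_logMoment_div]
  field_simp
  ring

lemma hasDerivAt_cmom_succ {px : ℝ → ℝ} {t : ℝ} (j : ℕ) (ht : -1 < t)
    (hI : LogMomentsIntegrable px t) (hm : marg px t ≠ 0)
    (hD : HasDerivAt (marg px)
      (∫ x in Ioi (0:ℝ), (Real.log x - digamma (t + 1)) * plik x t * px x) t)
    (hμ : HasDerivAt (postExp px Real.log) (cmom px 2 t) t)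
    (hF : HasDerivAt (fun s => ∫ x in Ioi (0:ℝ),
        (Real.log x - postExp px Real.log s) ^ (j + 1) * plik x s * px x)
      (∫ x in Ioi (0:ℝ),
        deriv (fun s => (Real.log x - postExp px Real.log s) ^ (j + 1) * plik x s * px x) t) t) :
    HasDerivAt (cmom px (j + 1))
      (cmom px (j + 2) t - (j + 1) * cmom px 2 t * cmom px j t) t := by
  set c := postExp px Real.log t with hc
  refine (hF.congr_deriv ?_).div_of_common_drift (hasDerivAt_marg hI hm hD) hm
  rw [hI.setIntegral_eq_logMoment_comb c (-((j + 1) * cmom px 2 t)) 1 (c - digamma (t + 1))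
      j (j + 2) (j + 1) fun x hx => ?_]
  · change _ = _ * marg px t + _ * logMoment px c (j + 1) t
    simp only [cmom_eq_logMoment_div, ← hc]
    field_simp
    ring
  have hd : HasDerivAt (fun s => (Real.log x - postExp px Real.log s) ^ (j + 1) * plik x s * px x)
      (((j + 1 : ℕ) * (Real.log x - c) ^ j * (0 - cmom px 2 t) * plik x t
        + (Real.log x - c) ^ (j + 1) * ((Real.log x - digamma (t + 1)) * plik x t)) * px x) t :=
    ((((hasDerivAt_const t _).sub hμ).pow (j + 1)).mul (hasDerivAt_plik hx ht)).mul_const _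
  rw [hd.deriv]
  push_cast
  ring

/-- All posterior central moments of log x are determined by the posterior mean
mu_1 = E[log x | y] and its derivatives: mu_2 = mu_1', mu_3 = mu_1'', and
mu_{k+1} = mu_k' + k mu_2 mu_{k-1} for k >= 3. -/
theorem poisson_moments_from_posterior_mean (px : ℝ → ℝ)
    (hnn : ∀ x ∈ Set.Ioi (0:ℝ), 0 ≤ px x)
    (hpos : ∀ t : ℝ, -1 < t → 0 < marg px t)
    (hint : ∀ (t : ℝ), -1 < t → ∀ k : ℕ,
      IntegrableOn (fun x => |Real.log x| ^ k * plik x t * px x) (Set.Ioi 0))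
    -- differentiation under the integral sign for the marginal, at every point:
    (hmargD : ∀ t : ℝ, -1 < t → HasDerivAt (marg px)
      (∫ x in Set.Ioi (0:ℝ), (Real.log x - digamma (t + 1)) * plik x t * px x) t)
    -- differentiation under the integral sign for the numerator of mu_1:
    (hND : ∀ t : ℝ, -1 < t →
      HasDerivAt (fun s => ∫ x in Set.Ioi (0:ℝ), Real.log x * plik x s * px x)
      (∫ x in Set.Ioi (0:ℝ),
        Real.log x * (Real.log x - digamma (t + 1)) * plik x t * px x) t)
    -- differentiation under the integral sign for every centered moment:
    (hDUI : ∀ (j : ℕ) (t : ℝ), -1 < t → HasDerivAt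
      (fun s => ∫ x in Set.Ioi (0:ℝ),
        (Real.log x - postExp px Real.log s) ^ j * plik x s * px x)
      (∫ x in Set.Ioi (0:ℝ),
        deriv (fun s => (Real.log x - postExp px Real.log s) ^ j * plik x s * px x) t) t) :
    ∀ y : ℝ, -1 < y →
      (deriv (postExp px Real.log) y = cmom px 2 y ∧
       deriv (deriv (postExp px Real.log)) y = cmom px 3 y ∧
       ∀ k : ℕ, 3 ≤ k →
         cmom px (k + 1) y
           = deriv (cmom px k) y + (k : ℝ) * cmom px 2 y * cmom px (k - 1) y) := by
  have hI : ∀ t, -1 < t → LogMomentsIntegrable px t := fun t ht =>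
    logMomentsIntegrable_of_abs_log_pow hnn ht (hint t ht)
  have hmean : ∀ t, -1 < t → HasDerivAt (postExp px Real.log) (cmom px 2 t) t := fun t ht =>
    hasDerivAt_postExp_log (hI t ht) (hpos t ht).ne' (hmargD t ht) (hND t ht)
  intro y hy
  have hrec : ∀ j : ℕ, HasDerivAt (cmom px (j + 1))
      (cmom px (j + 2) y - (j + 1) * cmom px 2 y * cmom px j y) y := fun j =>
    hasDerivAt_cmom_succ j hy (hI y hy) (hpos y hy).ne' (hmargD y hy) (hmean y hy) (hDUI _ y hy)
  refine ⟨(hmean y hy).deriv, ?_, fun k _ => ?_⟩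
  · have hderiv : deriv (postExp px Real.log) =ᶠ[nhds y] cmom px 2 :=
      eventually_gt_nhds hy |>.mono fun t ht => (hmean t ht).deriv
    rw [hderiv.deriv_eq, (hrec 1).deriv, cmom_one (hI y hy) (hpos y hy).ne']
    ring
  · obtain ⟨j, rfl⟩ : ∃ j, k = j + 1 := ⟨k - 1, by omega⟩
    rw [(hrec j).deriv, Nat.add_sub_cancel]
    push_cast
    ring
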